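/- arXiv:2407.11649 — 4 statements merged into one kernel-verified Lean document; each statement's English description precedes it below -/
import Mathlib

section
/- Let π be a feedback strategy on the lattice Λ_N with |π(t,x)| ≤ c for all (t,x), and let (X̃^1, X̃^2) be the coupled process on ℝ^d × (hℤ^d) with generator 𝓛^π_t (the deterministic flow ẋ = π̂(t, X̃^2) coupled with the Markov chain with Kolmogorov matrix Q̂^N[π,·]), starting from (x̃^1_*, x̃^2_*). Then for every t ≥ 0, E|X̃^1_t − X̃^2_t|² ≤ |x̃^1_* − x̃^2_*|² + √d · c · N^{-1} · t. -/
/-!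
Apply the martingale problem to `φ(x¹, x²) = ‖x¹ - x²‖²`. The drift `π(t, x²)` of `x¹` equals the
mean displacement rate of the jumps of `x²`, so their first-order contributions to `𝓛^π φ` cancel
and only the jump variance `N⁻¹ ∑ᵢ |πᵢ(t, x²)| ≤ N⁻¹ √d c` remains. Taking expectations in Dynkin's
formula gives the linear growth bound.
-/

open scoped BigOperators
open MeasureTheory Filter

noncomputable section

abbrev Evec (d : ℕ) := EuclideanSpace ℝ (Fin d)

/-- The generator of the coupled deterministic/Markov-chain dynamics:
the deterministic flow `ẋ¹ = π(t, x²)` coupled with the continuous-time Markov chain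
on the lattice `h·ℤ^d` (`h = 1/N`) jumping from `x²` to `x² + h·sgn(π_i(t,x²)) e_i`
with rate `h⁻¹ |π_i(t,x²)|`. -/
def gen (d N : ℕ) (π : ℝ → Evec d → Evec d) (φ : Evec d × Evec d → ℝ)
    (t : ℝ) (p : Evec d × Evec d) : ℝ :=
  fderiv ℝ (fun y => φ (y, p.2)) p.1 (π t p.2)
    + ∑ i, (N : ℝ) * |π t p.2 i| *
        (φ (p.1, p.2 + (N : ℝ)⁻¹ • EuclideanSpace.single i (Real.sign (π t p.2 i))) - φ p)

open scoped RealInnerProductSpace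

namespace Real

lemma sign_mul_abs (x : ℝ) : sign x * |x| = x := by
  rcases lt_trichotomy x 0 with h | rfl | h
  · rw [sign_of_neg h, abs_of_neg h]; ring
  · simp
  · rw [sign_of_pos h, abs_of_pos h]; ring

lemma sign_sq_mul_abs (x : ℝ) : sign x ^ 2 * |x| = |x| := by
  rcases lt_trichotomy x 0 with h | rfl | h
  · rw [sign_of_neg h]; ring
  · simp
  · rw [sign_of_pos h]; ring

end Real

namespace EuclideanSpace

variable {ι : Type*} [Fintype ι]

lemma sum_abs_le_sqrt_card_mul_norm (x : EuclideanSpace ℝ ι) :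
    ∑ i, |x i| ≤ √(Fintype.card ι) * ‖x‖ := by
  have hCS := Real.sum_mul_le_sqrt_mul_sqrt Finset.univ (fun i => |x i|) fun _ => 1
  simp only [mul_one, sq_abs, one_pow, Finset.sum_const, Finset.card_univ, nsmul_eq_mul] at hCS
  rw [EuclideanSpace.norm_eq, mul_comm]
  simpa only [Real.norm_eq_abs, sq_abs] using hCS

lemma inner_eq_sum_mul (w v : EuclideanSpace ℝ ι) : ⟪w, v⟫ = ∑ i, v i * w i := by
  simp [PiLp.inner_apply]

variable [DecidableEq ι]

lemma rate_mul_normSq_sub_single_sub {r : ℝ} (hr : r ≠ 0) (w : EuclideanSpace ℝ ι) (i : ι)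
    (a : ℝ) :
    r * |a| * (‖w - r⁻¹ • single i (Real.sign a)‖ ^ 2 - ‖w‖ ^ 2)
      = -2 * (a * w i) + r⁻¹ * |a| := by
  have hinner : ⟪w, r⁻¹ • single i (Real.sign a)⟫ = r⁻¹ * (Real.sign a * w i) := by
    simp [real_inner_smul_right, inner_single_right]
  have hnorm : ‖r⁻¹ • single i (Real.sign a)‖ ^ 2 = r⁻¹ ^ 2 * Real.sign a ^ 2 := by
    simp [norm_smul, mul_pow, sq_abs]
  rw [norm_sub_sq_real, hinner, hnorm]
  calc r * |a| * (‖w‖ ^ 2 - 2 * (r⁻¹ * (Real.sign a * w i)) + r⁻¹ ^ 2 * Real.sign a ^ 2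
          - ‖w‖ ^ 2)
      = (r * r⁻¹) * (-2 * ((Real.sign a * |a|) * w i) + r⁻¹ * (Real.sign a ^ 2 * |a|)) := by
        ring
    _ = -2 * (a * w i) + r⁻¹ * |a| := by
        rw [mul_inv_cancel₀ hr, Real.sign_mul_abs, Real.sign_sq_mul_abs]; ring

end EuclideanSpace

lemma fderiv_normSq_sub_const_apply {E : Type*} [NormedAddCommGroup E] [InnerProductSpace ℝ E]
    (x y v : E) : fderiv ℝ (fun z => ‖z - y‖ ^ 2) x v = 2 * ⟪x - y, v⟫ := by
  have hd : HasFDerivAt (fun z => ‖z - y‖ ^ 2) _ x :=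
    ((hasFDerivAt_id x).sub_const y).norm_sq
  rw [hd.fderiv]
  simp [two_mul, inner_sub_left]

lemma contDiff_normSq_fst_sub_snd {E : Type*} [NormedAddCommGroup E] [InnerProductSpace ℝ E] :
    ContDiff ℝ 1 fun q : E × E => ‖q.1 - q.2‖ ^ 2 :=
  (contDiff_fst.sub contDiff_snd).norm_sq ℝ

lemma normSq_fst_sub_snd_le {E : Type*} [SeminormedAddCommGroup E] (q : E × E) :
    ‖q.1 - q.2‖ ^ 2 ≤ 4 * (1 + ‖q‖ ^ 2) := by
  have h : ‖q.1 - q.2‖ ≤ 2 * ‖q‖ := by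
    linarith [norm_sub_le q.1 q.2, norm_fst_le q, norm_snd_le q]
  nlinarith [norm_nonneg (q.1 - q.2)]

lemma gen_normSq_sub (d N : ℕ) [NeZero N] (π : ℝ → Evec d → Evec d) (t : ℝ)
    (p : Evec d × Evec d) :
    gen d N π (fun q => ‖q.1 - q.2‖ ^ 2) t p = (N : ℝ)⁻¹ * ∑ i, |π t p.2 i| := by
  obtain ⟨x₁, x₂⟩ := p
  have hjump (i : Fin d) := EuclideanSpace.rate_mul_normSq_sub_single_sub
    (Nat.cast_ne_zero.2 (NeZero.ne N)) (x₁ - x₂) i (π t x₂ i)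
  simp only [gen, fderiv_normSq_sub_const_apply, sub_add_eq_sub_sub, hjump,
    EuclideanSpace.inner_eq_sum_mul, Finset.sum_add_distrib, ← Finset.mul_sum]
  simp [Finset.mul_sum]

lemma gen_normSq_sub_le (d N : ℕ) [NeZero N] {π : ℝ → Evec d → Evec d} {c : ℝ}
    (hπ : ∀ t x, ‖π t x‖ ≤ c) (t : ℝ) (p : Evec d × Evec d) :
    gen d N π (fun q => ‖q.1 - q.2‖ ^ 2) t p ≤ √d * c * (N : ℝ)⁻¹ := by
  rw [gen_normSq_sub, mul_comm]
  gcongr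
  calc ∑ i, |π t p.2 i| ≤ √d * ‖π t p.2‖ := by
        simpa using EuclideanSpace.sum_abs_le_sqrt_card_mul_norm (π t p.2)
    _ ≤ √d * c := by gcongr; exact hπ t p.2

lemma intervalIntegral_le_mul_of_le {G : ℝ → ℝ} {B t : ℝ} (hG : ∀ s, G s ≤ B) (hB : 0 ≤ B)
    (ht : 0 ≤ t) : ∫ s in (0 : ℝ)..t, G s ≤ B * t := by
  by_cases hint : IntervalIntegrable G volume 0 t
  · calc ∫ s in (0 : ℝ)..t, G s ≤ ∫ _ in (0 : ℝ)..t, B :=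
          intervalIntegral.integral_mono_on ht hint intervalIntegrable_const fun s _ => hG s
      _ = B * t := by simp [mul_comm]
  · rw [intervalIntegral.integral_undef hint]
    positivity

lemma integral_le_of_martingale_sub_intervalIntegral {Ω : Type*} {m0 : MeasurableSpace Ω}
    {P : Measure Ω} [IsProbabilityMeasure P] {F : Filtration ℝ m0} {Z G : ℝ → Ω → ℝ} {B t : ℝ}
    (hM : Martingale (fun t ω => Z t ω - ∫ s in (0 : ℝ)..t, G s ω) F P)
    (hG : ∀ s ω, G s ω ≤ B) (hB : 0 ≤ B) (ht : 0 ≤ t) (hZ₀ : 0 ≤ Z 0) :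
    ∫ ω, Z t ω ∂P ≤ ∫ ω, Z 0 ω ∂P + B * t := by
  set M := fun t ω => Z t ω - ∫ s in (0 : ℝ)..t, G s ω
  have hZM : ∀ ω, Z t ω ≤ M t ω + B * t := fun ω => by
    linarith [intervalIntegral_le_mul_of_le (hG · ω) hB ht]
  have hmean : ∫ ω, M t ω ∂P = ∫ ω, Z 0 ω ∂P := by
    simpa [M] using (hM.setIntegral_eq ht MeasurableSet.univ).symm
  by_cases hint : Integrable (Z t) P
  · calc ∫ ω, Z t ω ∂P ≤ ∫ ω, (M t ω + B * t) ∂P :=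
          integral_mono hint ((hM.integrable t).add (integrable_const _)) hZM
      _ = ∫ ω, Z 0 ω ∂P + B * t := by
          rw [integral_add (hM.integrable t) (integrable_const _), hmean]
          simp
  · rw [integral_undef hint]
    have : 0 ≤ ∫ ω, Z 0 ω ∂P := integral_nonneg hZ₀
    positivity

theorem stmt3_general (d N : ℕ) [NeZero N] (π : ℝ → Evec d → Evec d) (c : ℝ)
    (hπ : ∀ t x, ‖π t x‖ ≤ c)
    (Ω : Type*) [m0 : MeasurableSpace Ω] (P : Measure Ω) [IsProbabilityMeasure P]
    (F : Filtration ℝ m0)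
    (X1 X2 : ℝ → Ω → Evec d) (x1s x2s : Evec d)
    (hini : ∀ ω, X1 0 ω = x1s ∧ X2 0 ω = x2s)
    (hmart : ∀ φ : Evec d × Evec d → ℝ, ContDiff ℝ 1 φ →
      (∃ C : ℝ, ∀ p, |φ p| ≤ C * (1 + ‖p‖ ^ 2)) →
      Martingale (fun t ω => φ (X1 t ω, X2 t ω)
          - ∫ s in (0:ℝ)..t, gen d N π φ s (X1 s ω, X2 s ω)) F P) :
    ∀ t : ℝ, 0 ≤ t →
      (∫ ω, ‖X1 t ω - X2 t ω‖ ^ 2 ∂P)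
        ≤ ‖x1s - x2s‖ ^ 2 + Real.sqrt d * c * (N : ℝ)⁻¹ * t := by
  intro t ht
  have hc : 0 ≤ c := (norm_nonneg _).trans (hπ 0 0)
  have hM := hmart _ contDiff_normSq_fst_sub_snd
    ⟨4, fun q => (abs_of_nonneg (by positivity)).trans_le (normSq_fst_sub_snd_le q)⟩
  calc ∫ ω, ‖X1 t ω - X2 t ω‖ ^ 2 ∂P
      ≤ ∫ ω, ‖X1 0 ω - X2 0 ω‖ ^ 2 ∂P + √d * c * (N : ℝ)⁻¹ * t :=
        integral_le_of_martingale_sub_intervalIntegral hM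
          (fun s ω => gen_normSq_sub_le d N hπ s _) (by positivity) ht fun _ => by positivity
    _ = ‖x1s - x2s‖ ^ 2 + √d * c * (N : ℝ)⁻¹ * t := by simp [hini]

/-- if `|π(t,x)| ≤ c` and `(X̃¹, X̃²)` solves the martingale problem for
the coupling generator `𝓛^π_t` starting from `(x̃¹_*, x̃²_*)` (with `X̃²` lattice-valued),
then `E|X̃¹_t − X̃²_t|² ≤ |x̃¹_* − x̃²_*|² + √d · c · N⁻¹ · t` for all `t ≥ 0`. -/
theorem stmt3 (d N : ℕ) [NeZero N] (π : ℝ → Evec d → Evec d) (c : ℝ)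
    (hπ : ∀ t x, ‖π t x‖ ≤ c)
    (Ω : Type*) [m0 : MeasurableSpace Ω] (P : Measure Ω) [IsProbabilityMeasure P]
    (F : Filtration ℝ m0)
    (X1 X2 : ℝ → Ω → Evec d) (x1s x2s : Evec d)
    (hini : ∀ ω, X1 0 ω = x1s ∧ X2 0 ω = x2s)
    (hlat : ∀ t ω i, ∃ k : ℤ, (X2 t ω) i = (k : ℝ) / N)
    (hmart : ∀ φ : Evec d × Evec d → ℝ, ContDiff ℝ 1 φ →
      (∃ C : ℝ, ∀ p, |φ p| ≤ C * (1 + ‖p‖ ^ 2)) →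
      Martingale (fun t ω => φ (X1 t ω, X2 t ω)
          - ∫ s in (0:ℝ)..t, gen d N π φ s (X1 s ω, X2 s ω)) F P) :
    ∀ t : ℝ, 0 ≤ t →
      (∫ ω, ‖X1 t ω - X2 t ω‖ ^ 2 ∂P)
        ≤ ‖x1s - x2s‖ ^ 2 + Real.sqrt d * c * (N : ℝ)⁻¹ * t :=
  stmt3_general d N π c hπ Ω (m0 := m0) P F X1 X2 x1s x2s hini hmart
end
end

section
/- Let φ_{N,λ} : Λ_N → ℝ solve the discrete stationary Bellman equation λφ_{N,λ}(x) + 𝓗_N(x, (−Δ_N)φ_{N,λ}(x)) = 0 on Λ_N, and suppose λ|φ_{N,λ}(x)| ≤ c₀ for all x. Then for every x ∈ Λ_N and i ∈ {1,…,d}: |Δ^+_{N,i}φ_{N,λ}(x)| ≤ c₃ and |Δ^-_{N,i}φ_{N,λ}(x)| ≤ c₃, where c₃ := c₀ + sup_{x∈𝕋^d, |v|≤1} L(x,v). Consequently φ_{N,λ} is Lipschitz on Λ_N with a constant c₄ depending only on L and d. -/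
/-!
Testing the supremum defining `𝓗_N(x, −Δ_N φ(x))` against `v = ±eᵢ` turns the Bellman equation,
together with `λ|φ| ≤ c₀`, into the one-sided bounds `−Δ^±_{N,i} φ(x) ≤ c₀ + sup_{‖v‖ ≤ 1} L`; the
superlinear growth of `L` is what makes that supremum finite. The shift identity
`Δ^+_{N,i} φ(x) = −Δ^-_{N,i} φ(x + h eᵢ)` makes the bounds two-sided. Summing unit increments along a
lattice path realising `y − x` and comparing its ℓ¹ and ℓ² lengths (Cauchy–Schwarz) gives the
Lipschitz bound with `c₄ = √d · max c₃ 0`.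
-/

open scoped BigOperators RealInnerProductSpace
open MeasureTheory Filter

noncomputable section

def sgnz (a : ℝ) : ℤ := if 0 < a then 1 else if a < 0 then -1 else 0

def latE (d N : ℕ) (x : Fin d → ZMod N) : Evec d :=
  (WithLp.equiv 2 (Fin d → ℝ)).symm fun i => ((x i).val : ℝ) / N

def dplus {d N : ℕ} (φ : (Fin d → ZMod N) → ℝ) (x : Fin d → ZMod N) (i : Fin d) : ℝ :=
  (N : ℝ) * (φ (x + Pi.single i 1) - φ x)

def dminus {d N : ℕ} (φ : (Fin d → ZMod N) → ℝ) (x : Fin d → ZMod N) (i : Fin d) : ℝ :=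
  (N : ℝ) * (φ (x - Pi.single i 1) - φ x)

def DeltaN {d N : ℕ} (φ : (Fin d → ZMod N) → ℝ) (x : Fin d → ZMod N) : Fin d → ℝ × ℝ :=
  fun i => (dplus φ x i, dminus φ x i)

def negDeltaN {d N : ℕ} (φ : (Fin d → ZMod N) → ℝ) (x : Fin d → ZMod N) : Fin d → ℝ × ℝ :=
  fun i => (-dplus φ x i, -dminus φ x i)

def pairL {d : ℕ} (ξ : Fin d → ℝ × ℝ) (v : Evec d) : ℝ :=
  ∑ i, ((ξ i).1 * max (v i) 0 + (ξ i).2 * max (-(v i)) 0)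

def QN {d N : ℕ} (v : Evec d) (x y : Fin d → ZMod N) : ℝ :=
  (∑ i, if y = x + Pi.single i ((sgnz (v i) : ZMod N)) then (N : ℝ) * |v i| else 0)
    - (if y = x then (N : ℝ) * ∑ i, |v i| else 0)

def HNlat {d N : ℕ} (L : Evec d → Evec d → ℝ) (x : Fin d → ZMod N)
    (ξ : Fin d → ℝ × ℝ) : ℝ :=
  ⨆ v : Evec d, (pairL ξ v - L (latE d N x) v)

def latDist (d N : ℕ) (x y : Fin d → ZMod N) : ℝ :=
  sInf {r : ℝ | ∃ k : Fin d → ℤ, (∀ i, ((k i : ZMod N) = y i - x i)) ∧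
    r = Real.sqrt (∑ i, ((k i : ℝ) / N) ^ 2)}

section IncrementBounds

variable {G : Type*} [AddCommGroup G] {φ : G → ℝ} {δ : ℝ}

lemma abs_sub_le_of_abs_add_sub_le {a : G} (h : ∀ x, |φ (x + a) - φ x| ≤ δ) (x : G) (n : ℤ) :
    |φ (x + n • a) - φ x| ≤ δ * |(n : ℝ)| := by
  have hnat : ∀ (x : G) (m : ℕ), |φ (x + m • a) - φ x| ≤ δ * m := by
    intro x m
    induction m with
    | zero => simp
    | succ m ih =>
      calc |φ (x + (m + 1) • a) - φ x|
          ≤ |φ ((x + m • a) + a) - φ (x + m • a)| + |φ (x + m • a) - φ x| := by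
            rw [succ_nsmul, ← add_assoc]; exact abs_sub_le _ _ _
        _ ≤ δ + δ * m := add_le_add (h _) ih
        _ = δ * ↑(m + 1) := by push_cast; ring
  obtain ⟨m, rfl | rfl⟩ := Int.eq_nat_or_neg n
  · simpa using hnat x m
  · have := hnat (x + (-(m : ℤ)) • a) m
    rw [abs_sub_comm] at this
    simpa [add_assoc] using this

lemma abs_sub_le_of_abs_add_sub_le_sum {ι : Type*} {a : ι → G}
    (h : ∀ i x, |φ (x + a i) - φ x| ≤ δ) (k : ι → ℤ) (x : G) (s : Finset ι) :
    |φ (x + ∑ i ∈ s, k i • a i) - φ x| ≤ δ * ∑ i ∈ s, |(k i : ℝ)| := by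
  classical
  induction s using Finset.induction_on with
  | empty => simp
  | @insert j s hj ih =>
    set y := x + ∑ i ∈ s, k i • a i
    calc |φ (x + ∑ i ∈ insert j s, k i • a i) - φ x|
        ≤ |φ (y + k j • a j) - φ y| + |φ y - φ x| := by
          rw [Finset.sum_insert hj, add_comm (k j • a j), ← add_assoc]; exact abs_sub_le _ _ _
      _ ≤ δ * |(k j : ℝ)| + δ * ∑ i ∈ s, |(k i : ℝ)| :=
          add_le_add (abs_sub_le_of_abs_add_sub_le (h j) y (k j)) ih
      _ = δ * ∑ i ∈ insert j s, |(k i : ℝ)| := by rw [Finset.sum_insert hj, mul_add]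

end IncrementBounds

lemma sum_abs_le_sqrt_card_mul_sqrt_sum_sq {ι : Type*} [Fintype ι] (f : ι → ℝ) :
    ∑ i, |f i| ≤ √(Fintype.card ι) * √(∑ i, f i ^ 2) := by
  rw [← Real.sqrt_mul (Nat.cast_nonneg _),
    ← Real.sqrt_sq (Finset.sum_nonneg fun i _ => abs_nonneg (f i))]
  apply Real.sqrt_le_sqrt
  simpa using sq_sum_le_card_mul_sum_sq (s := Finset.univ) (f := fun i => |f i|)


section Hamiltonian

variable {d : ℕ}

lemma pairL_single_one (ξ : Fin d → ℝ × ℝ) (i : Fin d) :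
    pairL ξ (EuclideanSpace.single i 1) = (ξ i).1 := by
  rw [pairL, Finset.sum_eq_single i (fun j _ hj => by simp [hj]) (by simp)]
  simp

lemma pairL_single_neg_one (ξ : Fin d → ℝ × ℝ) (i : Fin d) :
    pairL ξ (EuclideanSpace.single i (-1)) = (ξ i).2 := by
  rw [pairL, Finset.sum_eq_single i (fun j _ hj => by simp [hj]) (by simp)]
  simp

lemma pairL_le_mul_norm (ξ : Fin d → ℝ × ℝ) (v : Evec d) :
    pairL ξ v ≤ (∑ i, (|(ξ i).1| + |(ξ i).2|)) * ‖v‖ := by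
  rw [pairL, Finset.sum_mul]
  refine Finset.sum_le_sum fun i _ => ?_
  have hvi : |v i| ≤ ‖v‖ := PiLp.norm_apply_le v i
  have hpos : max (v i) 0 ≤ ‖v‖ := max_le ((le_abs_self _).trans hvi) (norm_nonneg v)
  have hneg : max (-v i) 0 ≤ ‖v‖ := max_le ((neg_le_abs _).trans hvi) (norm_nonneg v)
  rw [add_mul]
  gcongr <;> first | exact le_max_right _ _ | exact le_abs_self _

variable {L : Evec d → Evec d → ℝ} {g : ℝ → ℝ}

lemma bddAbove_range_pairL_sub (hsl : ∀ a : ℝ, 0 ≤ a → ∀ (x v : Evec d), a * ‖v‖ + g a ≤ L x v)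
    (ξ : Fin d → ℝ × ℝ) (y : Evec d) :
    BddAbove (Set.range fun v => pairL ξ v - L y v) := by
  set A := ∑ i, (|(ξ i).1| + |(ξ i).2|)
  refine ⟨-g A, ?_⟩
  rintro _ ⟨v, rfl⟩
  have := pairL_le_mul_norm ξ v
  have := hsl A (by positivity) y v
  dsimp only
  linarith

lemma pairL_le_HNlat_add {N : ℕ}
    (hsl : ∀ a : ℝ, 0 ≤ a → ∀ (x v : Evec d), a * ‖v‖ + g a ≤ L x v)
    (x : Fin d → ZMod N) (ξ : Fin d → ℝ × ℝ) (v : Evec d) :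
    pairL ξ v ≤ HNlat L x ξ + L (latE d N x) v := by
  have : pairL ξ v - L (latE d N x) v ≤ HNlat L x ξ :=
    le_ciSup (bddAbove_range_pairL_sub hsl ξ _) v
  linarith

lemma neg_dplus_le_and_neg_dminus_le {N : ℕ} {c0 : ℝ}
    (hsl : ∀ a : ℝ, 0 ≤ a → ∀ (x v : Evec d), a * ‖v‖ + g a ≤ L x v)
    (hbdd : BddAbove {r : ℝ | ∃ (x v : Evec d), ‖v‖ ≤ 1 ∧ r = L x v})
    {φ : (Fin d → ZMod N) → ℝ} {x : Fin d → ZMod N} (hH : HNlat L x (negDeltaN φ x) ≤ c0)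
    (i : Fin d) :
    -dplus φ x i ≤ c0 + sSup {r : ℝ | ∃ (x v : Evec d), ‖v‖ ≤ 1 ∧ r = L x v} ∧
      -dminus φ x i ≤ c0 + sSup {r : ℝ | ∃ (x v : Evec d), ‖v‖ ≤ 1 ∧ r = L x v} := by
  have hL : ∀ v : Evec d, ‖v‖ ≤ 1 →
      L (latE d N x) v ≤ sSup {r : ℝ | ∃ (x v : Evec d), ‖v‖ ≤ 1 ∧ r = L x v} :=
    fun v hv => le_csSup hbdd ⟨_, v, hv, rfl⟩
  have hplus := pairL_le_HNlat_add hsl x (negDeltaN φ x) (EuclideanSpace.single i 1)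
  have hminus := pairL_le_HNlat_add hsl x (negDeltaN φ x) (EuclideanSpace.single i (-1))
  rw [pairL_single_one] at hplus
  rw [pairL_single_neg_one] at hminus
  have := hL _ (by simp : ‖EuclideanSpace.single i (1 : ℝ)‖ ≤ 1)
  have := hL _ (by simp : ‖EuclideanSpace.single i (-1 : ℝ)‖ ≤ 1)
  simp only [negDeltaN] at hplus hminus
  constructor <;> linarith

end Hamiltonian

section Lattice

variable {d N : ℕ}

lemma dplus_eq_neg_dminus_add_single (φ : (Fin d → ZMod N) → ℝ) (x : Fin d → ZMod N) (i : Fin d) :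
    dplus φ x i = -dminus φ (x + Pi.single i 1) i := by
  simp only [dplus, dminus, add_sub_cancel_right]; ring

lemma dminus_eq_neg_dplus_sub_single (φ : (Fin d → ZMod N) → ℝ) (x : Fin d → ZMod N) (i : Fin d) :
    dminus φ x i = -dplus φ (x - Pi.single i 1) i := by
  simp only [dplus, dminus, sub_add_cancel]; ring

lemma abs_dplus_le_and_abs_dminus_le {φ : (Fin d → ZMod N) → ℝ} {C : ℝ}
    (h : ∀ x i, -dplus φ x i ≤ C ∧ -dminus φ x i ≤ C) (x : Fin d → ZMod N) (i : Fin d) :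
    |dplus φ x i| ≤ C ∧ |dminus φ x i| ≤ C := by
  have hplus := dplus_eq_neg_dminus_add_single φ x i
  have hminus := dminus_eq_neg_dplus_sub_single φ x i
  have hx := h x i
  have hright := (h (x + Pi.single i 1) i).2
  have hleft := (h (x - Pi.single i 1) i).1
  exact ⟨abs_le.2 ⟨by linarith, by linarith⟩, abs_le.2 ⟨by linarith, by linarith⟩⟩

lemma abs_sub_le_mul_latDist {φ : (Fin d → ZMod (N + 1)) → ℝ} {C : ℝ} (hC : 0 ≤ C)
    (h : ∀ x i, |dplus φ x i| ≤ C) (x y : Fin d → ZMod (N + 1)) :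
    |φ x - φ y| ≤ √d * C * latDist d (N + 1) x y := by
  have hN : (0 : ℝ) < ((N + 1 : ℕ) : ℝ) := by positivity
  have hstep : ∀ i x, |φ (x + Pi.single i 1) - φ x| ≤ C / ((N + 1 : ℕ) : ℝ) := by
    intro i x
    rw [le_div_iff₀ hN, mul_comm, ← abs_of_pos hN, ← abs_mul]
    exact h x i
  have hpath : ∀ k : Fin d → ℤ, (∀ i, (k i : ZMod (N + 1)) = y i - x i) →
      |φ x - φ y| ≤ √d * C * √(∑ i, ((k i : ℝ) / ((N + 1 : ℕ) : ℝ)) ^ 2) := by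
    intro k hk
    have hy : y = x + ∑ i, k i • Pi.single i (1 : ZMod (N + 1)) := by
      ext j
      simp [Finset.sum_apply, Pi.single_apply, hk j]
    calc |φ x - φ y| ≤ C / ((N + 1 : ℕ) : ℝ) * ∑ i, |(k i : ℝ)| := by
          rw [abs_sub_comm, hy]
          exact abs_sub_le_of_abs_add_sub_le_sum hstep k x Finset.univ
      _ = C * ∑ i, |(k i : ℝ) / ((N + 1 : ℕ) : ℝ)| := by
          simp only [Finset.mul_sum, abs_div, abs_of_pos hN]
          exact Finset.sum_congr rfl fun i _ => by ring
      _ ≤ C * (√d * √(∑ i, ((k i : ℝ) / ((N + 1 : ℕ) : ℝ)) ^ 2)) := by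
          gcongr
          simpa using sum_abs_le_sqrt_card_mul_sqrt_sum_sq fun i => (k i : ℝ) / ((N + 1 : ℕ) : ℝ)
      _ = _ := by ring
  have hne : {r : ℝ | ∃ k : Fin d → ℤ, (∀ i, ((k i : ZMod (N + 1)) = y i - x i)) ∧
      r = √(∑ i, ((k i : ℝ) / ((N + 1 : ℕ) : ℝ)) ^ 2)}.Nonempty :=
    ⟨_, fun i => ((y i - x i).val : ℤ), fun i => by simp, rfl⟩
  rw [latDist, ← smul_eq_mul, ← Real.sInf_smul_of_nonneg (by positivity)]
  refine le_csInf hne.smul_set ?_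
  rintro _ ⟨r, ⟨k, hk, rfl⟩, rfl⟩
  exact hpath k hk

end Lattice

theorem stmt8_general (d : ℕ) (L : Evec d → Evec d → ℝ) (g : ℝ → ℝ)
    (hsl : ∀ a : ℝ, 0 ≤ a → ∀ (x v : Evec d), a * ‖v‖ + g a ≤ L x v)
    (hbdd : BddAbove {r : ℝ | ∃ (x v : Evec d), ‖v‖ ≤ 1 ∧ r = L x v})
    (c0 c3 : ℝ)
    (hc3 : c3 = c0 + sSup {r : ℝ | ∃ (x v : Evec d), ‖v‖ ≤ 1 ∧ r = L x v}) :
    ∃ c4 : ℝ, ∀ (N : ℕ) (lam : ℝ), 0 < lam →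
      ∀ φ : (Fin d → ZMod (N + 1)) → ℝ,
        (∀ x, lam * φ x + HNlat L x (negDeltaN φ x) = 0) →
        (∀ x, lam * |φ x| ≤ c0) →
        (∀ x i, |dplus φ x i| ≤ c3 ∧ |dminus φ x i| ≤ c3) ∧
        (∀ x y, |φ x - φ y| ≤ c4 * latDist d (N + 1) x y) := by
  refine ⟨√d * max c3 0, fun N lam hlam φ hbellman hbd => ?_⟩
  have hH : ∀ x, HNlat L x (negDeltaN φ x) ≤ c0 := fun x => by
    have := mul_le_mul_of_nonneg_left (neg_le_abs (φ x)) hlam.le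
    linarith [hbellman x, hbd x]
  have hgrad : ∀ x i, |dplus φ x i| ≤ c3 ∧ |dminus φ x i| ≤ c3 :=
    abs_dplus_le_and_abs_dminus_le fun x i =>
      hc3 ▸ neg_dplus_le_and_neg_dminus_le hsl hbdd (hH x) i
  exact ⟨hgrad, abs_sub_le_mul_latDist (le_max_right _ _)
    fun x i => (hgrad x i).1.trans (le_max_left _ _)⟩

/-- a solution `φ_{N,λ}` of the discrete Bellman equation with
`λ|φ_{N,λ}| ≤ c₀` has all one-sided difference quotients bounded by
`c₃ := c₀ + sup_{x,|v|≤1} L(x,v)`, and consequently is Lipschitz on `Λ_N`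
with a constant `c₄` depending only on `L` and `d`. -/
theorem stmt8 (d : ℕ) (L : Evec d → Evec d → ℝ) (g : ℝ → ℝ)
    (hLc : Continuous (Function.uncurry L))
    (hconv : ∀ x : Evec d, ConvexOn ℝ Set.univ (L x))
    (hsl : ∀ a : ℝ, 0 ≤ a → ∀ (x v : Evec d), a * ‖v‖ + g a ≤ L x v)
    (hper : ∀ (x v : Evec d) (i : Fin d), L (x + EuclideanSpace.single i 1) v = L x v)
    (hbdd : BddAbove {r : ℝ | ∃ (x v : Evec d), ‖v‖ ≤ 1 ∧ r = L x v})
    (c0 c3 : ℝ) (hc0 : 0 ≤ c0)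
    (hc3 : c3 = c0 + sSup {r : ℝ | ∃ (x v : Evec d), ‖v‖ ≤ 1 ∧ r = L x v}) :
    ∃ c4 : ℝ, ∀ (N : ℕ) (lam : ℝ), 0 < lam →
      ∀ φ : (Fin d → ZMod (N + 1)) → ℝ,
        (∀ x, lam * φ x + HNlat L x (negDeltaN φ x) = 0) →
        (∀ x, lam * |φ x| ≤ c0) →
        (∀ x i, |dplus φ x i| ≤ c3 ∧ |dminus φ x i| ≤ c3) ∧
        (∀ x y, |φ x - φ y| ≤ c4 * latDist d (N + 1) x y) :=
  stmt8_general d L g hsl hbdd c0 c3 hc3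
end
end

section
/- Suppose φ : Λ_N → ℝ satisfies |Δ^+_{N,i}φ(x)|, |Δ^-_{N,i}φ(x)| ≤ c₃ for all x ∈ Λ_N and i ∈ {1,…,d}, and let π*(x) ∈ Argmax_{v∈ℝ^d}[(−Δ_N)φ(x)·v − L(x,v)] with 𝓗_N(x, (−Δ_N)φ(x)) ≤ c₀ for all x. Then |π*(x)| ≤ c₅ := c₀ − g(√d·c₃ + 1) for all x ∈ Λ_N. -/
/-!
Superlinearity of `L` with slope `a = √d c₃ + 1` against the maximality of `π*(x)`:
`a |π*| + g(a) ≤ L(x, π*) = (−Δ_N φ)(x) · π* − 𝓗_N ≤ √d c₃ |π*| + c₀`, because each one-sided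
difference quotient is at most `c₃` and `∑ |vᵢ| ≤ √d |v|`; the terms `√d c₃ |π*|` cancel.
-/

open scoped BigOperators RealInnerProductSpace
open MeasureTheory Filter

noncomputable section

open Finset

theorem EuclideanSpace.sum_abs_le_sqrt_card_mul_norm_s9 {ι : Type*} [Fintype ι]
    (v : EuclideanSpace ℝ ι) : ∑ i, |v i| ≤ √(Fintype.card ι) * ‖v‖ := by
  simpa [EuclideanSpace.norm_eq] using
    Real.sum_mul_le_sqrt_mul_sqrt univ (fun _ ↦ (1 : ℝ)) (fun i ↦ |v i|)

theorem mul_max_add_mul_max_neg_le {a b c v : ℝ} (ha : a ≤ c) (hb : b ≤ c) :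
    a * max v 0 + b * max (-v) 0 ≤ c * |v| := by
  rcases le_total v 0 with h | h
  · rw [max_eq_right h, max_eq_left (neg_nonneg.2 h), abs_of_nonpos h]; nlinarith
  · rw [max_eq_left h, max_eq_right (neg_nonpos.2 h), abs_of_nonneg h]; nlinarith

theorem pairL_le_sqrt_mul_mul_norm {d : ℕ} {ξ : Fin d → ℝ × ℝ} {c : ℝ} (hc : 0 ≤ c)
    (hξ : ∀ i, (ξ i).1 ≤ c ∧ (ξ i).2 ≤ c) (v : Evec d) :
    pairL ξ v ≤ √d * c * ‖v‖ :=
  calc pairL ξ v ≤ ∑ i, c * |v i| :=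
        sum_le_sum fun i _ ↦ mul_max_add_mul_max_neg_le (hξ i).1 (hξ i).2
    _ = c * ∑ i, |v i| := (mul_sum _ _ _).symm
    _ ≤ c * (√d * ‖v‖) := by
        simpa using mul_le_mul_of_nonneg_left (EuclideanSpace.sum_abs_le_sqrt_card_mul_norm_s9 v) hc
    _ = √d * c * ‖v‖ := by ring

theorem stmt9_general (d N : ℕ) (L : Evec d → Evec d → ℝ) (g : ℝ → ℝ)
    (hsl : ∀ a : ℝ, 0 ≤ a → ∀ (x v : Evec d), a * ‖v‖ + g a ≤ L x v)
    (φ : (Fin d → ZMod N) → ℝ) (c0 c3 : ℝ) (hc3 : 0 ≤ c3)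
    (hΔ : ∀ x i, |dplus φ x i| ≤ c3 ∧ |dminus φ x i| ≤ c3)
    (π : (Fin d → ZMod N) → Evec d)
    (hopt : ∀ x, pairL (negDeltaN φ x) (π x) - L (latE d N x) (π x)
      = HNlat L x (negDeltaN φ x))
    (hH : ∀ x, |HNlat L x (negDeltaN φ x)| ≤ c0) :
    ∀ x, ‖π x‖ ≤ c0 - g (Real.sqrt d * c3 + 1) := by
  intro x
  have hpair : pairL (negDeltaN φ x) (π x) ≤ √d * c3 * ‖π x‖ :=
    pairL_le_sqrt_mul_mul_norm hc3
      (fun i ↦ ⟨(neg_le_abs _).trans (hΔ x i).1, (neg_le_abs _).trans (hΔ x i).2⟩) _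
  have hsuper := hsl (√d * c3 + 1) (by positivity) (latE d N x) (π x)
  have hHlow := (abs_le.mp (hH x)).1
  linarith [hopt x]

/-- if `|Δ^±_{N,i}φ| ≤ c₃`, `π*(x)` achieves the max defining
`𝓗_N(x,(−Δ_N)φ(x))` and `|𝓗_N(x,(−Δ_N)φ(x))| ≤ c₀`, then
`|π*(x)| ≤ c₅ := c₀ − g(√d·c₃ + 1)`. -/
theorem stmt9 (d N : ℕ) [NeZero N] (L : Evec d → Evec d → ℝ) (g : ℝ → ℝ)
    (hsl : ∀ a : ℝ, 0 ≤ a → ∀ (x v : Evec d), a * ‖v‖ + g a ≤ L x v)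
    (φ : (Fin d → ZMod N) → ℝ) (c0 c3 : ℝ) (hc3 : 0 ≤ c3)
    (hΔ : ∀ x i, |dplus φ x i| ≤ c3 ∧ |dminus φ x i| ≤ c3)
    (π : (Fin d → ZMod N) → Evec d)
    (hopt : ∀ x, pairL (negDeltaN φ x) (π x) - L (latE d N x) (π x)
      = HNlat L x (negDeltaN φ x))
    (hH : ∀ x, |HNlat L x (negDeltaN φ x)| ≤ c0) :
    ∀ x, ‖π x‖ ≤ c0 - g (Real.sqrt d * c3 + 1) :=
  stmt9_general d N L g hsl φ c0 c3 hc3 hΔ π hopt hH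
end
end

section
/- Let (φ_N, H̄_N) solve the lattice weak KAM equation and let ν be a holonomic probability measure on Λ_N × ℝ^d with ∫ max(inf_x L(x,v), 1) ν(d(x,v)) < ∞. Then ∫_{Λ_N×ℝ^d} L(x,v) ν(d(x,v)) ≥ −H̄_N. Consequently, any holonomic measure of the form μ̂_N = ∑_x m̂_{N,x} δ_{(x,π*_N(x))} built from an optimal strategy π*_N (achieving the max in 𝓗_N(x,(−Δ_N)φ_N(x))) and a stationary distribution m̂_N is a Mather measure for Λ_N, and ∫ L dμ̂_N = −H̄_N. -/
/-!
The weak KAM equation gives the pointwise bound `L(x, v) ≥ -H̄_N - Δ_Nφ_N(x)·v` (the supremum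
defining `𝓗_N` is finite by superlinearity), with equality at `v = π*_N(x)`. The pairing
`Δ_Nφ(x)·v` is `∑_y φ(y) Q_N(v)(x, y)`, so it integrates to zero against a holonomic `ν` and,
by stationarity, against `∑_x m̂_x δ_{(x, π*_N(x))}`. Integrating the pointwise bound gives both
claims; superlinearity with slope `1` and the integrability hypothesis make `|v|`, hence
`Δ_Nφ_N(x)·v`, `ν`-integrable.
-/

open scoped BigOperators RealInnerProductSpace
open MeasureTheory Filter

noncomputable section

instance (n : ℕ) : MeasurableSpace (ZMod n) := ⊤

instance (n : ℕ) : MeasurableSingletonClass (ZMod n) :=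
  ⟨fun _ => MeasurableSpace.measurableSet_top⟩

def IsHolonomic {d N : ℕ} (ν : Measure ((Fin d → ZMod N) × Evec d)) : Prop :=
  ∀ φ : (Fin d → ZMod N) → ℝ, ∫ p, pairL (DeltaN φ p.1) p.2 ∂ν = 0

section Lattice

variable {d N : ℕ}

theorem pairL_neg (ξ : Fin d → ℝ × ℝ) (v : Evec d) : pairL (-ξ) v = -pairL ξ v := by
  simp only [pairL, ← Finset.sum_neg_distrib]
  refine Finset.sum_congr rfl fun i _ => ?_
  simp only [Pi.neg_apply, Prod.fst_neg, Prod.snd_neg]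
  ring

theorem pairL_negDeltaN (φ : (Fin d → ZMod N) → ℝ) (x : Fin d → ZMod N) (v : Evec d) :
    pairL (negDeltaN φ x) v = -pairL (DeltaN φ x) v :=
  pairL_neg (DeltaN φ x) v

theorem continuous_pairL (ξ : Fin d → ℝ × ℝ) : Continuous (pairL ξ) := by
  unfold pairL
  fun_prop

theorem abs_pairL_le (ξ : Fin d → ℝ × ℝ) (v : Evec d) :
    |pairL ξ v| ≤ (∑ i, (|(ξ i).1| + |(ξ i).2|)) * ‖v‖ := by
  rw [Finset.sum_mul]
  refine (Finset.abs_sum_le_sum_abs _ _).trans (Finset.sum_le_sum fun i _ => ?_)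
  have hv : |v i| ≤ ‖v‖ := PiLp.norm_apply_le v i
  have hpos : |max (v i) 0| ≤ ‖v‖ := by
    rw [abs_of_nonneg (le_max_right _ _)]
    exact (max_le (le_abs_self _) (abs_nonneg _)).trans hv
  have hneg : |max (-v i) 0| ≤ ‖v‖ := by
    rw [abs_of_nonneg (le_max_right _ _)]
    exact (max_le (neg_le_abs _) (abs_nonneg _)).trans hv
  calc |(ξ i).1 * max (v i) 0 + (ξ i).2 * max (-v i) 0|
      ≤ |(ξ i).1| * |max (v i) 0| + |(ξ i).2| * |max (-v i) 0| := by
        rw [← abs_mul, ← abs_mul]; exact abs_add_le _ _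
    _ ≤ (|(ξ i).1| + |(ξ i).2|) * ‖v‖ := by
        rw [add_mul]; gcongr

theorem sub_mul_abs_eq_dplus_dminus (φ : (Fin d → ZMod N) → ℝ) (x : Fin d → ZMod N)
    (i : Fin d) (a : ℝ) :
    (φ (x + Pi.single i (sgnz a : ZMod N)) - φ x) * (N * |a|)
      = dplus φ x i * max a 0 + dminus φ x i * max (-a) 0 := by
  rcases lt_trichotomy a 0 with ha | rfl | ha
  · have hs : sgnz a = -1 := by simp [sgnz, ha, ha.not_gt]
    rw [hs, Int.cast_neg, Int.cast_one, Pi.single_neg, ← sub_eq_add_neg, abs_of_neg ha,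
      max_eq_right ha.le, max_eq_left (by linarith), dplus, dminus]
    ring
  · simp
  · have hs : sgnz a = 1 := by simp [sgnz, ha]
    rw [hs, Int.cast_one, abs_of_pos ha, max_eq_left ha.le, max_eq_right (by linarith),
      dplus, dminus]
    ring

theorem sum_mul_QN [NeZero N] (φ : (Fin d → ZMod N) → ℝ) (x : Fin d → ZMod N) (v : Evec d) :
    ∑ y, φ y * QN v x y = pairL (DeltaN φ x) v := by
  simp only [QN, mul_sub, Finset.mul_sum, mul_ite, mul_zero, Finset.sum_sub_distrib]
  rw [Finset.sum_comm]
  simp only [Finset.sum_ite_eq', Finset.mem_univ, if_true, pairL, DeltaN,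
    ← sub_mul_abs_eq_dplus_dminus, sub_mul, Finset.sum_sub_distrib]

theorem sum_mul_pairL_DeltaN_eq_zero [NeZero N] (φ : (Fin d → ZMod N) → ℝ)
    (m : (Fin d → ZMod N) → ℝ) (π : (Fin d → ZMod N) → Evec d)
    (hstat : ∀ y, ∑ x, m x * QN (π x) x y = 0) :
    ∑ x, m x * pairL (DeltaN φ x) (π x) = 0 := by
  simp_rw [← sum_mul_QN, Finset.mul_sum]
  rw [Finset.sum_comm]
  simp_rw [mul_left_comm (m _), ← Finset.mul_sum, hstat, mul_zero, Finset.sum_const_zero]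

variable {L : Evec d → Evec d → ℝ} {φ : (Fin d → ZMod N) → ℝ} {H : ℝ}

theorem le_HNlat {g : ℝ → ℝ} (hsl : ∀ a : ℝ, 0 ≤ a → ∀ (x v : Evec d), a * ‖v‖ + g a ≤ L x v)
    (x : Fin d → ZMod N) (ξ : Fin d → ℝ × ℝ) (v : Evec d) :
    pairL ξ v - L (latE d N x) v ≤ HNlat L x ξ := by
  set C := ∑ i, (|(ξ i).1| + |(ξ i).2|)
  have hC : 0 ≤ C := by positivity
  refine le_ciSup (f := fun w => pairL ξ w - L (latE d N x) w) ⟨-g C, ?_⟩ v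
  rintro _ ⟨w, rfl⟩
  have hpair := (le_abs_self _).trans (abs_pairL_le ξ w)
  linarith [hsl C hC (latE d N x) w]

theorem neg_pairL_DeltaN_sub_le {g : ℝ → ℝ}
    (hsl : ∀ a : ℝ, 0 ≤ a → ∀ (x v : Evec d), a * ‖v‖ + g a ≤ L x v)
    {x : Fin d → ZMod N} (hKAM : HNlat L x (negDeltaN φ x) = H) (v : Evec d) :
    -pairL (DeltaN φ x) v - L (latE d N x) v ≤ H := by
  rw [← hKAM, ← pairL_negDeltaN]
  exact le_HNlat hsl x _ v

theorem sum_mul_L_eq_neg [NeZero N] {m : (Fin d → ZMod N) → ℝ} {π : (Fin d → ZMod N) → Evec d}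
    (hmsum : ∑ x, m x = 1) (hstat : ∀ y, ∑ x, m x * QN (π x) x y = 0)
    (hopt : ∀ x, pairL (negDeltaN φ x) (π x) - L (latE d N x) (π x) = H) :
    ∑ x, m x * L (latE d N x) (π x) = -H := by
  have hL : ∀ x, L (latE d N x) (π x) = -pairL (DeltaN φ x) (π x) - H := fun x => by
    linarith [hopt x, pairL_negDeltaN φ x (π x)]
  simp_rw [hL, mul_sub, mul_neg, Finset.sum_sub_distrib, Finset.sum_neg_distrib,
    sum_mul_pairL_DeltaN_eq_zero φ m π hstat, ← Finset.sum_mul, hmsum]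
  ring

end Lattice

section Integrability

variable {α : Type*} [MeasurableSpace α]

theorem ofReal_integral_le_lintegral_ofReal (μ : Measure α) (f : α → ℝ) :
    ENNReal.ofReal (∫ a, f a ∂μ) ≤ ∫⁻ a, ENNReal.ofReal (f a) ∂μ := by
  by_cases hf : Integrable f μ
  · rw [integral_eq_lintegral_pos_part_sub_lintegral_neg_part hf]
    exact (ENNReal.ofReal_le_ofReal (sub_le_self _ ENNReal.toReal_nonneg)).trans
      ENNReal.ofReal_toReal_le
  · simp [integral_undef hf]

variable {d : ℕ} {ν : Measure (α × Evec d)}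

theorem integrable_norm_snd_of_integrable_max_iInf [IsFiniteMeasure ν]
    {L : Evec d → Evec d → ℝ} {c : ℝ} (hL : ∀ x v, ‖v‖ + c ≤ L x v)
    (hInt : Integrable (fun p : α × Evec d => max (⨅ x : Evec d, L x p.2) 1) ν) :
    Integrable (fun p : α × Evec d => ‖p.2‖) ν := by
  refine (hInt.sub (integrable_const c)).mono' (by fun_prop) (.of_forall fun p => ?_)
  have hinf : ‖p.2‖ + c ≤ ⨅ x, L x p.2 := le_ciInf fun x => hL x p.2
  rw [Pi.sub_apply, norm_norm]
  linarith [le_max_left (⨅ x, L x p.2) 1]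

theorem integrable_pairL [Fintype α] [MeasurableSingletonClass α] (Ξ : α → Fin d → ℝ × ℝ)
    (hnorm : Integrable (fun p : α × Evec d => ‖p.2‖) ν) :
    Integrable (fun p : α × Evec d => pairL (Ξ p.1) p.2) ν := by
  set C := ∑ x, ∑ i, (|(Ξ x i).1| + |(Ξ x i).2|)
  have hmeas : Measurable fun p : α × Evec d => pairL (Ξ p.1) p.2 :=
    measurable_from_prod_countable_right fun x => (continuous_pairL (Ξ x)).measurable
  refine (hnorm.const_mul C).mono' hmeas.aestronglyMeasurable (.of_forall fun p => ?_)
  have hCx : ∑ i, (|(Ξ p.1 i).1| + |(Ξ p.1 i).2|) ≤ C :=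
    Finset.single_le_sum (f := fun x => ∑ i, (|(Ξ x i).1| + |(Ξ x i).2|))
      (fun _ _ => by positivity) (Finset.mem_univ p.1)
  rw [Real.norm_eq_abs]
  exact (abs_pairL_le _ _).trans (mul_le_mul_of_nonneg_right hCx (norm_nonneg _))

end Integrability

theorem IsHolonomic.ofReal_neg_sub_le_lintegral {d N : ℕ} [NeZero N]
    {ν : Measure ((Fin d → ZMod N) × Evec d)} [IsProbabilityMeasure ν] (hν : IsHolonomic ν)
    {L : Evec d → Evec d → ℝ} {g : ℝ → ℝ}
    (hsl : ∀ a : ℝ, 0 ≤ a → ∀ (x v : Evec d), a * ‖v‖ + g a ≤ L x v)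
    {φ : (Fin d → ZMod N) → ℝ} {H : ℝ} (hKAM : ∀ x, HNlat L x (negDeltaN φ x) = H)
    (hInt : Integrable (fun p : (Fin d → ZMod N) × Evec d =>
      max (⨅ x : Evec d, L x p.2) 1) ν) (c : ℝ) :
    ENNReal.ofReal (-H - c) ≤ ∫⁻ p, ENNReal.ofReal (L (latE d N p.1) p.2 - c) ∂ν := by
  have hnorm := integrable_norm_snd_of_integrable_max_iInf
    (fun x v => by simpa using hsl 1 zero_le_one x v) hInt
  have hpair := integrable_pairL (DeltaN φ) hnorm
  calc ENNReal.ofReal (-H - c)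
      = ENNReal.ofReal (∫ p, ((-H - c) - pairL (DeltaN φ p.1) p.2) ∂ν) := by
        rw [integral_sub (integrable_const _) hpair, hν φ, integral_const, probReal_univ,
          one_smul, sub_zero]
    _ ≤ ∫⁻ p, ENNReal.ofReal ((-H - c) - pairL (DeltaN φ p.1) p.2) ∂ν :=
        ofReal_integral_le_lintegral_ofReal ν _
    _ ≤ ∫⁻ p, ENNReal.ofReal (L (latE d N p.1) p.2 - c) ∂ν :=
        lintegral_mono fun p => ENNReal.ofReal_le_ofReal <| by
          linarith [neg_pairL_DeltaN_sub_le hsl (hKAM p.1) p.2]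

theorem stmt18_general (d N : ℕ) [NeZero N] (L : Evec d → Evec d → ℝ) (g : ℝ → ℝ)
    (hsl : ∀ a : ℝ, 0 ≤ a → ∀ (x v : Evec d), a * ‖v‖ + g a ≤ L x v)
    (φN : (Fin d → ZMod N) → ℝ) (HbarN : ℝ)
    (hKAM : ∀ x, HNlat L x (negDeltaN φN x) = HbarN)
    (m : (Fin d → ZMod N) → ℝ) (π : (Fin d → ZMod N) → Evec d)
    (hmsum : ∑ x, m x = 1)
    (hstat : ∀ y, ∑ x, m x * QN (π x) x y = 0)
    (hopt : ∀ x, pairL (negDeltaN φN x) (π x) - L (latE d N x) (π x) = HbarN) :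
    (∀ ν : Measure ((Fin d → ZMod N) × Evec d), IsProbabilityMeasure ν →
      Integrable (fun p : (Fin d → ZMod N) × Evec d =>
        max (⨅ x : Evec d, L x p.2) 1) ν →
      (∀ φ : (Fin d → ZMod N) → ℝ, ∫ p, pairL (DeltaN φ p.1) p.2 ∂ν = 0) →
      ENNReal.ofReal (-HbarN - g 0)
        ≤ ∫⁻ p, ENNReal.ofReal (L (latE d N p.1) p.2 - g 0) ∂ν) ∧
    ∑ x, m x * L (latE d N x) (π x) = -HbarN :=
  ⟨fun _ _ hInt hhol => IsHolonomic.ofReal_neg_sub_le_lintegral hhol hsl hKAM hInt (g 0),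
    sum_mul_L_eq_neg hmsum hstat hopt⟩

/-- every holonomic probability measure `ν` on `Λ_N × ℝ^d` with finite
integral of the weight `max(inf_x L(x,v), 1)` satisfies `∫ L dν ≥ −H̄_N`
(stated via the lower integral of the nonnegative integrand `L − g(0)`);
consequently a holonomic measure `μ̂_N = ∑_x m̂_{N,x} δ_{(x, π*_N(x))}` built from an
optimal strategy `π*_N` and a stationary distribution `m̂_N` is a Mather measure
for `Λ_N`, with `∫ L dμ̂_N = −H̄_N`. -/
theorem stmt18 (d N : ℕ) [NeZero N] (L : Evec d → Evec d → ℝ) (g : ℝ → ℝ)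
    (hLc : Continuous (Function.uncurry L))
    (hconv : ∀ x : Evec d, ConvexOn ℝ Set.univ (L x))
    (hsl : ∀ a : ℝ, 0 ≤ a → ∀ (x v : Evec d), a * ‖v‖ + g a ≤ L x v)
    (hper : ∀ (x v : Evec d) (i : Fin d), L (x + EuclideanSpace.single i 1) v = L x v)
    (φN : (Fin d → ZMod N) → ℝ) (HbarN : ℝ)
    (hKAM : ∀ x, HNlat L x (negDeltaN φN x) = HbarN)
    (m : (Fin d → ZMod N) → ℝ) (π : (Fin d → ZMod N) → Evec d)
    (hm : ∀ x, 0 ≤ m x) (hmsum : ∑ x, m x = 1)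
    (hstat : ∀ y, ∑ x, m x * QN (π x) x y = 0)
    (hopt : ∀ x, pairL (negDeltaN φN x) (π x) - L (latE d N x) (π x) = HbarN) :
    (∀ ν : Measure ((Fin d → ZMod N) × Evec d), IsProbabilityMeasure ν →
      Integrable (fun p : (Fin d → ZMod N) × Evec d =>
        max (⨅ x : Evec d, L x p.2) 1) ν →
      (∀ φ : (Fin d → ZMod N) → ℝ, ∫ p, pairL (DeltaN φ p.1) p.2 ∂ν = 0) →
      ENNReal.ofReal (-HbarN - g 0)
        ≤ ∫⁻ p, ENNReal.ofReal (L (latE d N p.1) p.2 - g 0) ∂ν) ∧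
    ∑ x, m x * L (latE d N x) (π x) = -HbarN :=
  stmt18_general d N L g hsl φN HbarN hKAM m π hmsum hstat hopt
end
end
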